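/- Let M = [[a, b], [-c, -d]] be a mixed invertible 2 × 2 integer matrix with a, b, c, d > 0, and suppose ad > bc. Then every bounded M-subgraph of ℕ² contains exactly one point of the rectangle R = {(s,t) ∈ ℕ² : s < b and t < c}. -/

import Mathlib

/-- Adjacency in the graph `Γ(M)` on `ℕ²` for `M = [[a,b],[-c,-d]]`. -/
def edge2 (a b c d : ℕ) (u v : ℕ × ℕ) : Prop :=
  (u.1 = v.1 + a ∧ v.2 = u.2 + c) ∨ (v.1 = u.1 + a ∧ u.2 = v.2 + c) ∨
  (u.1 = v.1 + b ∧ v.2 = u.2 + d) ∨ (v.1 = u.1 + b ∧ u.2 = v.2 + d)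

/-- The `M`-subgraph (connected component of `Γ(M)`) containing `u`. -/
def Mcomp (a b c d : ℕ) (u : ℕ × ℕ) : Set (ℕ × ℕ) :=
  {v | Relation.ReflTransGen (edge2 a b c d) u v}

/-!
A point `p` of the rectangle can never be left by a net step `(a, -c)` or `(-b, d)`: any walk
from `p` ends at `p - m (a, -c) + n (b, -d)` with `m, n ≥ 0`, because the first edge that would make
`m` or `n` negative would have to start from a point with a coordinate below that of `p`.
Two rectangle points in one component therefore satisfy `M (a, c) = N (b, d)` with `M, N ≥ 0`,
which forces `M = N = 0` as `ad ≠ bc`. For existence, both moves `(-b, d)` and `(a, -c)` raise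
`(c + d) s + (a + b) t` by `ad - bc > 0`, so its maximum over a finite component lies in the
rectangle.
-/

section

variable {a b c d : ℕ}

instance : Std.Symm (edge2 a b c d) where
  symm _ _ h := by unfold edge2 at *; tauto

lemma mem_Mcomp_comm {u v : ℕ × ℕ} (h : v ∈ Mcomp a b c d u) : u ∈ Mcomp a b c d v :=
  Std.Symm.symm _ _ h

lemma mem_Mcomp_of_mem_of_mem {u p q : ℕ × ℕ} (hp : p ∈ Mcomp a b c d u)
    (hq : q ∈ Mcomp a b c d u) : q ∈ Mcomp a b c d p :=
  Relation.ReflTransGen.trans (mem_Mcomp_comm hp) hq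

lemma exists_offsets_of_mem_Mcomp {p q : ℕ × ℕ} (hp1 : p.1 < b) (hp2 : p.2 < c)
    (hq : q ∈ Mcomp a b c d p) :
    ∃ m n : ℕ, q.1 + m * a = p.1 + n * b ∧ q.2 + n * d = p.2 + m * c := by
  induction hq with
  | refl => exact ⟨0, 0, by simp, by simp⟩
  | tail _ hqr ih =>
    obtain ⟨m, n, h1, h2⟩ := ih
    rcases hqr with ⟨e1, e2⟩ | ⟨e1, e2⟩ | ⟨e1, e2⟩ | ⟨e1, e2⟩
    · exact ⟨m + 1, n, by linarith, by linarith⟩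
    · cases m with
      | zero => omega
      | succ m => exact ⟨m, n, by linarith, by linarith⟩
    · cases n with
      | zero => omega
      | succ n => exact ⟨m, n, by linarith, by linarith⟩
    · exact ⟨m, n + 1, by linarith, by linarith⟩

lemma eq_zero_of_mul_eq_of_mul_eq (hdet : a * d ≠ b * c) {M N : ℕ}
    (h1 : M * a = N * b) (h2 : N * d = M * c) : M = 0 ∧ N = 0 := by
  have hM : M * (a * d) = M * (b * c) := calc
    M * (a * d) = M * a * d := by ring
    _ = b * (N * d) := by rw [h1]; ring
    _ = M * (b * c) := by rw [h2]; ring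
  have hN : N * (a * d) = N * (b * c) := calc
    N * (a * d) = N * d * a := by ring
    _ = c * (M * a) := by rw [h2]; ring
    _ = N * (b * c) := by rw [h1]; ring
  exact ⟨by simpa [hdet] using hM, by simpa [hdet] using hN⟩

lemma eq_of_mem_Mcomp_of_mem_rectangle (hdet : a * d ≠ b * c) {p q : ℕ × ℕ}
    (hp1 : p.1 < b) (hp2 : p.2 < c) (hq1 : q.1 < b) (hq2 : q.2 < c)
    (hq : q ∈ Mcomp a b c d p) : q = p := by
  obtain ⟨m, n, h1, h2⟩ := exists_offsets_of_mem_Mcomp hp1 hp2 hq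
  obtain ⟨m', n', h1', h2'⟩ := exists_offsets_of_mem_Mcomp hq1 hq2 (mem_Mcomp_comm hq)
  obtain ⟨hM, hN⟩ := eq_zero_of_mul_eq_of_mul_eq hdet (M := m + m') (N := n + n')
    (by linarith) (by linarith)
  obtain ⟨rfl, rfl⟩ : m = 0 ∧ m' = 0 := by omega
  obtain ⟨rfl, rfl⟩ : n = 0 ∧ n' = 0 := by omega
  exact Prod.ext (by simpa using h1) (by simpa using h2)

lemma exists_mem_rectangle_of_finite (hgt : b * c < a * d) {S : Set (ℕ × ℕ)}
    (hS : S.Finite) (hne : S.Nonempty) (hclosed : ∀ p ∈ S, ∀ q, edge2 a b c d p q → q ∈ S) :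
    ∃ p ∈ S, p.1 < b ∧ p.2 < c := by
  obtain ⟨p, hp, hmax⟩ := hS.exists_maximalFor (fun v => (c + d) * v.1 + (a + b) * v.2) S hne
  have not_lt_of_edge : ∀ q, edge2 a b c d p q →
      ¬ (c + d) * p.1 + (a + b) * p.2 < (c + d) * q.1 + (a + b) * q.2 :=
    fun q hq hlt => (hmax (hclosed p hp q hq) hlt.le).not_gt hlt
  refine ⟨p, hp, ?_, ?_⟩
  · by_contra! hb
    obtain ⟨k, hk⟩ := Nat.exists_eq_add_of_le' hb
    exact not_lt_of_edge (k, p.2 + d) (.inr <| .inr <| .inl ⟨hk, rfl⟩) (by simp only; nlinarith)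
  · by_contra! hc
    obtain ⟨k, hk⟩ := Nat.exists_eq_add_of_le' hc
    exact not_lt_of_edge (p.1 + a, k) (.inr <| .inl ⟨rfl, hk⟩) (by simp only; nlinarith)

end

theorem bounded_M_subgraph_meets_rectangle_general (a b c d : ℕ)
    (hgt : b * c < a * d) :
    ∀ u : ℕ × ℕ, (Mcomp a b c d u).Finite →
      ∃! p : ℕ × ℕ, p ∈ Mcomp a b c d u ∧ p.1 < b ∧ p.2 < c := by
  intro u hfin
  obtain ⟨p, hp, hp1, hp2⟩ := exists_mem_rectangle_of_finite hgt hfin ⟨u, .refl⟩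
    fun _ hv _ hvw => Relation.ReflTransGen.tail hv hvw
  refine ⟨p, ⟨hp, hp1, hp2⟩, fun q ⟨hq, hq1, hq2⟩ => ?_⟩
  exact eq_of_mem_Mcomp_of_mem_rectangle hgt.ne' hp1 hp2 hq1 hq2 (mem_Mcomp_of_mem_of_mem hp hq)

/-- If `ad > bc`, every bounded `M`-subgraph of `ℕ²` contains exactly one
point of the rectangle `R = {(s,t) : s < b, t < c}`. -/
theorem bounded_M_subgraph_meets_rectangle (a b c d : ℕ)
    (ha : 0 < a) (hb : 0 < b) (hc : 0 < c) (hd : 0 < d)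
    (hgt : b * c < a * d) :
    ∀ u : ℕ × ℕ, (Mcomp a b c d u).Finite →
      ∃! p : ℕ × ℕ, p ∈ Mcomp a b c d u ∧ p.1 < b ∧ p.2 < c :=
  bounded_M_subgraph_meets_rectangle_general a b c d hgt
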